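/- Fix a composition μ = (μ_1,...,μ_n) of M+N and let D_a(u), E_{a,b}(u), F_{b,a}(u) be the blocks of the Gauss decomposition T(u) = F(u)D(u)E(u) with respect to μ. Then for all 1 < a+1 < b ≤ n and any fixed 1 ≤ k ≤ μ_{b-1}, E_{a,b;i,j}^{(r)} = (-1)^{|k|_{b-1}} [E_{a,b-1;i,k}^{(r)}, E_{b-1;k,j}^{(1)}] and F_{b,a;j,i}^{(r)} = (-1)^{|k|_{b-1}} [F_{b-1;j,k}^{(1)}, F_{b-1,a;k,i}^{(r)}], where E_{b-1} := E_{b-1,b}, F_{b-1} := F_{b,b-1}, and the brackets are supercommutators. -/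
import Mathlib


noncomputable section

namespace SuperYangian

/-- The sign `(-1)^x` for `x : ZMod 2`. -/
def sgn (x : ZMod 2) : ℂ := if x = 0 then 1 else -1

variable {A : Type*}

/-- The supercommutator `[x, y] = x*y - ε • (y*x)` with prescribed sign `ε`
(for homogeneous `x`, `y` one takes `ε = (-1)^{|x||y|}`). -/
def scomm [Ring A] [Algebra ℂ A] (ε : ℂ) (x y : A) : A := x * y - ε • (y * x)

/-- `off μ a = μ 0 + ⋯ + μ (a-1)`. -/
def off (μ : ℕ → ℕ) (a : ℕ) : ℕ := ∑ b ∈ Finset.range a, μ b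

/-- A family `t i j r` (the coefficient of `u^{-r}` in `t_{ij}(u)`, with 0-based
indices `i j < d`) satisfying the defining RTT relations of the super Yangian
`Y(gl_{M|N})` with parity sequence `p`; the super Yangian itself, via
`t_{i+1,j+1}^{(r)} = t i j r`, is the universal such family. -/
structure RTT (A : Type*) [Ring A] [Algebra ℂ A] (d : ℕ) (p : ℕ → ZMod 2) where
  t : ℕ → ℕ → ℕ → A
  t_zero : ∀ i j, t i j 0 = if i = j then (1 : A) else 0
  rtt : ∀ i j h k r s : ℕ, i < d → j < d → h < d → k < d →
    scomm (sgn ((p i + p j) * (p h + p k))) (t i j r) (t h k s) =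
      sgn (p i * p j + p i * p h + p j * p h) •
        ∑ g ∈ Finset.range (min r s),
          (t h j g * t i k (r + s - 1 - g) - t h j (r + s - 1 - g) * t i k g)

/-- Gauss decomposition data `T(u) = F(u) D(u) E(u)` with respect to the composition
`μ = (μ 0, …, μ (n-1))`, in coefficient form.  `E a b i j r` is the coefficient of
`u^{-r}` in the `(i,j)`-entry of the block `E_{a,b}(u)` (0-based blocks and entries),
extended by the identity on the diagonal blocks and by `0` below them; similarly `F`.
`D a` are the diagonal blocks and `D' a` their inverses.  Since the Gauss
decomposition is unique, this data consists exactly of the quasideterminant blocks. -/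
structure Gauss [Ring A] [Algebra ℂ A] (T : ℕ → ℕ → ℕ → A) (n : ℕ) (μ : ℕ → ℕ) where
  D : ℕ → ℕ → ℕ → ℕ → A
  D' : ℕ → ℕ → ℕ → ℕ → A
  E : ℕ → ℕ → ℕ → ℕ → ℕ → A
  F : ℕ → ℕ → ℕ → ℕ → ℕ → A
  E_diag : ∀ a i j r, E a a i j r = if i = j ∧ r = 0 then 1 else 0
  E_low : ∀ a b i j r, b < a → E a b i j r = 0
  E_zero : ∀ a b i j, a < b → E a b i j 0 = 0
  F_diag : ∀ a i j r, F a a i j r = if i = j ∧ r = 0 then 1 else 0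
  F_high : ∀ a b i j r, a < b → F a b i j r = 0
  F_zero : ∀ a b i j, b < a → F a b i j 0 = 0
  D_zero : ∀ a i j, D a i j 0 = if i = j then (1 : A) else 0
  D_inv : ∀ a i j r, a < n → i < μ a → j < μ a →
    ∑ q ∈ Finset.range (μ a), ∑ e ∈ Finset.range (r + 1), D a i q e * D' a q j (r - e) =
      if i = j ∧ r = 0 then 1 else 0
  D_inv' : ∀ a i j r, a < n → i < μ a → j < μ a →
    ∑ q ∈ Finset.range (μ a), ∑ e ∈ Finset.range (r + 1), D' a i q e * D a q j (r - e) =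
      if i = j ∧ r = 0 then 1 else 0
  decomp : ∀ a b i j r, a < n → b < n → i < μ a → j < μ b →
    T (off μ a + i) (off μ b + j) r =
      ∑ c ∈ Finset.range n, ∑ q1 ∈ Finset.range (μ c), ∑ q2 ∈ Finset.range (μ c),
        ∑ e1 ∈ Finset.range (r + 1), ∑ e2 ∈ Finset.range (r + 1 - e1),
          F a c i q1 e1 * D c q1 q2 e2 * E c b q2 j (r - e1 - e2)


/-! ### Auxiliary infrastructure -/

set_option linter.unusedSectionVars false

section Infra

open Finset

variable [Ring A] [Algebra ℂ A]

lemma zmod2_cases (x : ZMod 2) : x = 0 ∨ x = 1 := by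
  fin_cases x
  · exact Or.inl rfl
  · exact Or.inr rfl

lemma sgn_zero : sgn 0 = 1 := rfl

lemma sgn_add (x y : ZMod 2) : sgn (x + y) = sgn x * sgn y := by
  have h11 : ((1 : ZMod 2) + 1) = 0 := by decide
  rcases zmod2_cases x with rfl | rfl <;> rcases zmod2_cases y with rfl | rfl <;>
    simp [sgn, h11] <;> norm_num

lemma sgn_mul_self (x : ZMod 2) : sgn x * sgn x = 1 := by
  rcases zmod2_cases x with rfl | rfl <;> simp [sgn] <;> norm_num

lemma sgn_smul_sgn_smul (x : ZMod 2) (a : A) : sgn x • sgn x • a = a := by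
  rw [smul_smul, sgn_mul_self, one_smul]

lemma sgn_smul_cancel {x : ZMod 2} {a b : A} (h : sgn x • a = b) : a = sgn x • b := by
  rw [← h, sgn_smul_sgn_smul]

lemma sgn_smul_eq_zero {x : ZMod 2} {a : A} (h : sgn x • a = 0) : a = 0 := by
  have := congrArg (fun y => sgn x • y) h
  simpa [sgn_smul_sgn_smul] using this

/- scomm basic lemmas -/

lemma scomm_zero_left (ε : ℂ) (y : A) : scomm ε 0 y = 0 := by simp [scomm]

lemma scomm_zero_right (ε : ℂ) (x : A) : scomm ε x 0 = 0 := by simp [scomm]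

lemma scomm_one_left (y : A) : scomm 1 1 y = 0 := by simp [scomm]

lemma scomm_sub_left (ε : ℂ) (x x' y : A) :
    scomm ε (x - x') y = scomm ε x y - scomm ε x' y := by
  simp only [scomm, sub_mul, mul_sub, smul_sub]; abel

lemma scomm_sub_right (ε : ℂ) (x y y' : A) :
    scomm ε x (y - y') = scomm ε x y - scomm ε x y' := by
  simp only [scomm, sub_mul, mul_sub, smul_sub]; abel

lemma scomm_smul_left (ε z : ℂ) (x y : A) : scomm ε (z • x) y = z • scomm ε x y := by
  simp only [scomm, smul_mul_assoc, mul_smul_comm, smul_sub, smul_comm ε z]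

lemma scomm_smul_right (ε z : ℂ) (x y : A) : scomm ε x (z • y) = z • scomm ε x y := by
  simp only [scomm, smul_mul_assoc, mul_smul_comm, smul_sub, smul_comm ε z]

lemma scomm_sum_left {ι : Type*} (s : Finset ι) (ε : ℂ) (f : ι → A) (y : A) :
    scomm ε (∑ i ∈ s, f i) y = ∑ i ∈ s, scomm ε (f i) y := by
  simp only [scomm, Finset.sum_mul, Finset.mul_sum, Finset.smul_sum,
    Finset.sum_sub_distrib]

lemma scomm_sum_right {ι : Type*} (s : Finset ι) (ε : ℂ) (f : ι → A) (x : A) :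
    scomm ε x (∑ i ∈ s, f i) = ∑ i ∈ s, scomm ε x (f i) := by
  simp only [scomm, Finset.sum_mul, Finset.mul_sum, Finset.smul_sum,
    Finset.sum_sub_distrib]

lemma scomm_mul_left (ε₁ ε₂ : ℂ) (x y t : A) :
    scomm (ε₁ * ε₂) (x * y) t = x * scomm ε₂ y t + ε₂ • (scomm ε₁ x t) * y := by
  simp only [scomm, mul_sub, sub_mul, smul_sub, smul_mul_assoc, mul_smul_comm,
    smul_smul, mul_assoc]
  rw [mul_comm ε₂ ε₁]
  abel

lemma scomm_mul_right (ε₁ ε₂ : ℂ) (t x y : A) :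
    scomm (ε₁ * ε₂) t (x * y) = (scomm ε₁ t x) * y + ε₁ • x * scomm ε₂ t y := by
  simp only [scomm, mul_sub, sub_mul, smul_sub, smul_mul_assoc, mul_smul_comm,
    smul_smul, mul_assoc]
  rw [mul_comm ε₁ ε₂]
  abel

lemma scomm_flip (x : ZMod 2) (a b : A) :
    scomm (sgn x) a b = -(sgn x • scomm (sgn x) b a) := by
  simp only [scomm, smul_sub, smul_smul, sgn_mul_self, one_smul, neg_sub]

/- convolution -/

/-- Block convolution of coefficient series. -/
def conv (m : ℕ) (f g : ℕ → ℕ → ℕ → A) : ℕ → ℕ → ℕ → A :=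
  fun i j r => ∑ q ∈ Finset.range m, ∑ e ∈ Finset.range (r + 1), f i q e * g q j (r - e)

/-- The identity series. -/
def dd : ℕ → ℕ → ℕ → A := fun i j r => if i = j ∧ r = 0 then 1 else 0

lemma conv_dd_left {m : ℕ} {g : ℕ → ℕ → ℕ → A} {i j r : ℕ} (hi : i < m) :
    conv m dd g i j r = g i j r := by
  unfold conv dd
  rw [Finset.sum_eq_single i]
  · rw [Finset.sum_eq_single 0]
    · simp
    · intro e he hne; simp [hne]
    · intro h; exact absurd (Finset.mem_range.2 (Nat.succ_pos r)) h
  · intro q _ hq; apply Finset.sum_eq_zero; intro e _; simp [Ne.symm hq]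
  · intro h; exact absurd (Finset.mem_range.2 hi) h

lemma conv_dd_right {m : ℕ} {f : ℕ → ℕ → ℕ → A} {i j r : ℕ} (hj : j < m) :
    conv m f dd i j r = f i j r := by
  unfold conv dd
  rw [Finset.sum_eq_single j]
  · rw [Finset.sum_eq_single r]
    · simp
    · intro e he hne
      have : ¬ (r - e = 0) := by
        have := Finset.mem_range.1 he; omega
      simp [this]
    · intro h; exact absurd (Finset.mem_range.2 (Nat.lt_succ_self r)) h
  · intro q _ hq; apply Finset.sum_eq_zero; intro e _; simp [hq]
  · intro h; exact absurd (Finset.mem_range.2 hj) h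

lemma conv_congr_left {m : ℕ} {f f' g : ℕ → ℕ → ℕ → A} {i j r : ℕ}
    (h : ∀ q < m, ∀ e, f i q e = f' i q e) :
    conv m f g i j r = conv m f' g i j r := by
  unfold conv
  refine Finset.sum_congr rfl fun q hq => Finset.sum_congr rfl fun e _ => ?_
  rw [h q (Finset.mem_range.1 hq)]

lemma conv_congr_right {m : ℕ} {f g g' : ℕ → ℕ → ℕ → A} {i j r : ℕ}
    (h : ∀ q < m, ∀ e, g q j e = g' q j e) :
    conv m f g i j r = conv m f g' i j r := by
  unfold conv
  refine Finset.sum_congr rfl fun q hq => Finset.sum_congr rfl fun e _ => ?_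
  rw [h q (Finset.mem_range.1 hq)]

lemma conv_zero_left {m : ℕ} {f g : ℕ → ℕ → ℕ → A} {i j r : ℕ}
    (h : ∀ q < m, ∀ e, f i q e = 0) :
    conv m f g i j r = 0 := by
  unfold conv
  refine Finset.sum_eq_zero fun q hq => Finset.sum_eq_zero fun e _ => ?_
  rw [h q (Finset.mem_range.1 hq), zero_mul]

lemma conv_zero_right {m : ℕ} {f g : ℕ → ℕ → ℕ → A} {i j r : ℕ}
    (h : ∀ q < m, ∀ e, g q j e = 0) :
    conv m f g i j r = 0 := by
  unfold conv
  refine Finset.sum_eq_zero fun q hq => Finset.sum_eq_zero fun e _ => ?_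
  rw [h q (Finset.mem_range.1 hq), mul_zero]

lemma conv_sub_right (m : ℕ) (f g h : ℕ → ℕ → ℕ → A) (i j r : ℕ) :
    conv m f (fun q j' e => g q j' e - h q j' e) i j r =
      conv m f g i j r - conv m f h i j r := by
  unfold conv
  simp only [mul_sub, Finset.sum_sub_distrib]

lemma conv_sub_left (m : ℕ) (f g h : ℕ → ℕ → ℕ → A) (i j r : ℕ) :
    conv m (fun q j' e => f q j' e - g q j' e) h i j r =
      conv m f h i j r - conv m g h i j r := by
  unfold conv
  simp only [sub_mul, Finset.sum_sub_distrib]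

lemma conv_sum_right {ι : Type*} (s : Finset ι) (m : ℕ) (f : ℕ → ℕ → ℕ → A)
    (g : ι → ℕ → ℕ → ℕ → A) (i j r : ℕ) :
    conv m f (fun q j' e => ∑ c ∈ s, g c q j' e) i j r =
      ∑ c ∈ s, conv m f (g c) i j r := by
  unfold conv
  calc ∑ q ∈ range m, ∑ e ∈ range (r+1), f i q e * ∑ c ∈ s, g c q j (r - e)
      = ∑ q ∈ range m, ∑ e ∈ range (r+1), ∑ c ∈ s, f i q e * g c q j (r - e) := by
        refine Finset.sum_congr rfl fun q _ => Finset.sum_congr rfl fun e _ => ?_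
        rw [Finset.mul_sum]
    _ = ∑ q ∈ range m, ∑ c ∈ s, ∑ e ∈ range (r+1), f i q e * g c q j (r - e) := by
        refine Finset.sum_congr rfl fun q _ => ?_
        exact Finset.sum_comm
    _ = ∑ c ∈ s, ∑ q ∈ range m, ∑ e ∈ range (r+1), f i q e * g c q j (r - e) :=
        Finset.sum_comm

lemma conv_sum_left {ι : Type*} (s : Finset ι) (m : ℕ) (f : ι → ℕ → ℕ → ℕ → A)
    (g : ℕ → ℕ → ℕ → A) (i j r : ℕ) :
    conv m (fun q j' e => ∑ c ∈ s, f c q j' e) g i j r =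
      ∑ c ∈ s, conv m (f c) g i j r := by
  unfold conv
  calc ∑ q ∈ range m, ∑ e ∈ range (r+1), (∑ c ∈ s, f c i q e) * g q j (r - e)
      = ∑ q ∈ range m, ∑ e ∈ range (r+1), ∑ c ∈ s, f c i q e * g q j (r - e) := by
        refine Finset.sum_congr rfl fun q _ => Finset.sum_congr rfl fun e _ => ?_
        rw [Finset.sum_mul]
    _ = ∑ q ∈ range m, ∑ c ∈ s, ∑ e ∈ range (r+1), f c i q e * g q j (r - e) := by
        refine Finset.sum_congr rfl fun q _ => ?_
        exact Finset.sum_comm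
    _ = ∑ c ∈ s, ∑ q ∈ range m, ∑ e ∈ range (r+1), f c i q e * g q j (r - e) :=
        Finset.sum_comm

lemma conv_smul_right (m : ℕ) (z : ℂ) (f g : ℕ → ℕ → ℕ → A) (i j r : ℕ) :
    conv m f (fun q j' e => z • g q j' e) i j r = z • conv m f g i j r := by
  unfold conv
  simp only [mul_smul_comm, Finset.smul_sum]

lemma conv_smul_left (m : ℕ) (z : ℂ) (f g : ℕ → ℕ → ℕ → A) (i j r : ℕ) :
    conv m (fun q j' e => z • f q j' e) g i j r = z • conv m f g i j r := by
  unfold conv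
  simp only [smul_mul_assoc, Finset.smul_sum]

lemma sum_tri {M : Type*} [AddCommMonoid M] (r : ℕ) (φ : ℕ → ℕ → M) :
    ∑ e1 ∈ Finset.range (r + 1), ∑ e2 ∈ Finset.range (r + 1 - e1), φ e1 e2 =
      ∑ e ∈ Finset.range (r + 1), ∑ e1 ∈ Finset.range (e + 1), φ e1 (e - e1) := by
  rw [Finset.sum_sigma', Finset.sum_sigma']
  refine Finset.sum_nbij' (i := fun x => (⟨x.1 + x.2, x.1⟩ : Σ _ : ℕ, ℕ))
    (j := fun x => (⟨x.2, x.1 - x.2⟩ : Σ _ : ℕ, ℕ)) ?_ ?_ ?_ ?_ ?_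
  · rintro ⟨e1, e2⟩ hm
    simp only [Finset.mem_sigma, Finset.mem_range] at hm ⊢
    omega
  · rintro ⟨e, e1⟩ hm
    simp only [Finset.mem_sigma, Finset.mem_range] at hm ⊢
    omega
  · rintro ⟨e1, e2⟩ hm
    simp only [Finset.mem_sigma, Finset.mem_range] at hm
    show (⟨e1, e1 + e2 - e1⟩ : Σ _ : ℕ, ℕ) = ⟨e1, e2⟩
    congr 1
    omega
  · rintro ⟨e, e1⟩ hm
    simp only [Finset.mem_sigma, Finset.mem_range] at hm
    show (⟨e1 + (e - e1), e1⟩ : Σ _ : ℕ, ℕ) = ⟨e, e1⟩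
    congr 1
    omega
  · rintro ⟨e1, e2⟩ hm
    show φ e1 e2 = φ e1 (e1 + e2 - e1)
    rw [Nat.add_sub_cancel_left]

lemma conv_assoc (m1 m2 : ℕ) (f g h : ℕ → ℕ → ℕ → A) (i j r : ℕ) :
    conv m1 f (conv m2 g h) i j r = conv m2 (conv m1 f g) h i j r := by
  unfold conv
  calc
    ∑ q1 ∈ range m1, ∑ e1 ∈ range (r+1), f i q1 e1 *
        ∑ q2 ∈ range m2, ∑ e2 ∈ range ((r - e1) + 1), g q1 q2 e2 * h q2 j (r - e1 - e2)
      = ∑ q1 ∈ range m1, ∑ q2 ∈ range m2, ∑ e ∈ range (r+1), ∑ e1 ∈ range (e+1),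
          (f i q1 e1 * g q1 q2 (e - e1)) * h q2 j (r - e) := by
        refine Finset.sum_congr rfl fun q1 _ => ?_
        calc
          ∑ e1 ∈ range (r+1), f i q1 e1 *
              ∑ q2 ∈ range m2, ∑ e2 ∈ range ((r - e1) + 1), g q1 q2 e2 * h q2 j (r - e1 - e2)
            = ∑ e1 ∈ range (r+1), ∑ q2 ∈ range m2, ∑ e2 ∈ range (r + 1 - e1),
                f i q1 e1 * (g q1 q2 e2 * h q2 j (r - e1 - e2)) := by
              refine Finset.sum_congr rfl fun e1 he1 => ?_
              rw [Finset.mul_sum]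
              refine Finset.sum_congr rfl fun q2 _ => ?_
              rw [Finset.mul_sum]
              have : (r - e1) + 1 = r + 1 - e1 := by
                have := Finset.mem_range.1 he1; omega
              rw [this]
          _ = ∑ q2 ∈ range m2, ∑ e1 ∈ range (r+1), ∑ e2 ∈ range (r + 1 - e1),
                f i q1 e1 * (g q1 q2 e2 * h q2 j (r - e1 - e2)) := Finset.sum_comm
          _ = ∑ q2 ∈ range m2, ∑ e ∈ range (r+1), ∑ e1 ∈ range (e+1),
                (f i q1 e1 * g q1 q2 (e - e1)) * h q2 j (r - e) := by
              refine Finset.sum_congr rfl fun q2 _ => ?_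
              rw [sum_tri r (fun e1 e2 => f i q1 e1 * (g q1 q2 e2 * h q2 j (r - e1 - e2)))]
              refine Finset.sum_congr rfl fun e he => Finset.sum_congr rfl fun e1 he1 => ?_
              rw [← mul_assoc]
              have : r - e1 - (e - e1) = r - e := by
                have h1 := Finset.mem_range.1 he
                have h2 := Finset.mem_range.1 he1
                omega
              rw [this]
    _ = ∑ q2 ∈ range m2, ∑ e ∈ range (r+1),
          (∑ q1 ∈ range m1, ∑ e1 ∈ range (e+1), f i q1 e1 * g q1 q2 (e - e1)) * h q2 j (r - e) := by
        rw [Finset.sum_comm]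
        refine Finset.sum_congr rfl fun q2 _ => ?_
        rw [Finset.sum_comm]
        refine Finset.sum_congr rfl fun e _ => ?_
        rw [Finset.sum_mul]
        refine Finset.sum_congr rfl fun q1 _ => ?_
        rw [Finset.sum_mul]

end Infra

section GaussFacts

open Finset

variable [Ring A] [Algebra ℂ A] {d n : ℕ} {p : ℕ → ZMod 2} {μ : ℕ → ℕ}

lemma off_succ (μ : ℕ → ℕ) (c : ℕ) : off μ (c + 1) = off μ c + μ c :=
  Finset.sum_range_succ μ c

lemma off_mono (μ : ℕ → ℕ) {c c' : ℕ} (h : c ≤ c') : off μ c ≤ off μ c' := by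
  unfold off
  exact Finset.sum_le_sum_of_subset (Finset.range_subset_range.2 h)

lemma off_idx_lt (μ : ℕ → ℕ) {c c' q : ℕ} (h : c < c') (hq : q < μ c) :
    off μ c + q < off μ c' := by
  have h1 : off μ c + q < off μ (c + 1) := by rw [off_succ]; omega
  exact lt_of_lt_of_le h1 (off_mono μ h)

lemma off_idx_lt_d {c q : ℕ} (hd : off μ n = d) (hc : c < n) (hq : q < μ c) :
    off μ c + q < d := by
  rw [← hd]; exact off_idx_lt μ hc hq

variable (S : RTT A d p) (G : Gauss S.t n μ)

/-- The `(a,b)` block of `T` as a coefficient series. -/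
def Tb (S : RTT A d p) (μ : ℕ → ℕ) (a b : ℕ) : ℕ → ℕ → ℕ → A :=
  fun i j r => S.t (off μ a + i) (off μ b + j) r

/-- The contribution of the middle block `c` to the Gauss decomposition of the
`(a,b)` block. -/
def FDE (G : Gauss S.t n μ) (c a b : ℕ) : ℕ → ℕ → ℕ → A :=
  conv (μ c) (G.F a c) (conv (μ c) (G.D c) (G.E c b))

lemma decomp' {a b i j r : ℕ} (ha : a < n) (hb : b < n) (hi : i < μ a) (hj : j < μ b) :
    Tb S μ a b i j r = ∑ c ∈ Finset.range n, FDE S G c a b i j r := by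
  show S.t (off μ a + i) (off μ b + j) r = _
  rw [G.decomp a b i j r ha hb hi hj]
  refine Finset.sum_congr rfl fun c _ => ?_
  unfold FDE conv
  refine Finset.sum_congr rfl fun q1 _ => ?_
  rw [Finset.sum_comm]
  refine Finset.sum_congr rfl fun e1 he1 => ?_
  rw [Finset.mul_sum]
  refine Finset.sum_congr rfl fun q2 _ => ?_
  rw [Finset.mul_sum]
  have : r + 1 - e1 = (r - e1) + 1 := by
    have := Finset.mem_range.1 he1; omega
  rw [this]
  refine Finset.sum_congr rfl fun e2 _ => ?_
  rw [mul_assoc]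

lemma FDE_zero_high {c a b i j r : ℕ} (h : a < c) : FDE S G c a b i j r = 0 := by
  unfold FDE
  exact conv_zero_left fun q hq e => G.F_high a c i q e h

lemma FDE_zero_low {c a b i j r : ℕ} (h : b < c) : FDE S G c a b i j r = 0 := by
  unfold FDE
  refine conv_zero_right fun q hq e => ?_
  exact conv_zero_right fun q' hq' e' => G.E_low c b q' j e' h

lemma decomp_trunc {a b i j r : ℕ} (ha : a < n) (hb : b < n) (hi : i < μ a) (hj : j < μ b)
    (_hab : a ≤ b) :
    Tb S μ a b i j r = ∑ c ∈ Finset.range (a + 1), FDE S G c a b i j r := by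
  rw [decomp' S G ha hb hi hj]
  symm
  apply Finset.sum_subset (Finset.range_subset_range.2 (by omega))
  intro c _ hc
  have : a < c := by
    simp only [Finset.mem_range] at hc ⊢
    omega
  exact FDE_zero_high S G this

lemma dd_cast {i j r : ℕ} : (if i = j ∧ r = 0 then (1:A) else 0) = dd i j r := rfl

/-- `D'` at order `0` is the identity. -/
lemma D'_zero {c i j : ℕ} (hc : c < n) (hi : i < μ c) (hj : j < μ c) :
    G.D' c i j 0 = dd i j 0 := by
  have h := G.D_inv c i j 0 hc hi hj
  rw [Finset.sum_eq_single i] at h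
  · rw [Finset.sum_range_one, G.D_zero] at h
    simpa [dd] using h
  · intro q _ hq
    rw [Finset.sum_range_one, G.D_zero]
    simp [Ne.symm hq]
  · intro hmem
    exact absurd (Finset.mem_range.2 hi) hmem

/-- `D c * D' c = dd` in convolution form. -/
lemma conv_D_D' {c i j r : ℕ} (hc : c < n) (hi : i < μ c) (hj : j < μ c) :
    conv (μ c) (G.D c) (G.D' c) i j r = dd i j r :=
  G.D_inv c i j r hc hi hj

lemma conv_D'_D {c i j r : ℕ} (hc : c < n) (hi : i < μ c) (hj : j < μ c) :
    conv (μ c) (G.D' c) (G.D c) i j r = dd i j r :=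
  G.D_inv' c i j r hc hi hj

end GaussFacts

section Solve

open Finset

variable [Ring A] [Algebra ℂ A] {d n : ℕ} {p : ℕ → ZMod 2} {μ : ℕ → ℕ}
variable (S : RTT A d p) (G : Gauss S.t n μ)

lemma decomp_trunc' {a b i j r : ℕ} (ha : a < n) (hb : b < n) (hi : i < μ a) (hj : j < μ b)
    (_hab : b ≤ a) :
    Tb S μ a b i j r = ∑ c ∈ Finset.range (b + 1), FDE S G c a b i j r := by
  rw [decomp' S G ha hb hi hj]
  symm
  apply Finset.sum_subset (Finset.range_subset_range.2 (by omega))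
  intro c _ hc
  have : b < c := by
    simp only [Finset.mem_range] at hc ⊢
    omega
  exact FDE_zero_low S G this

lemma FDE_diag_left {c b i j r : ℕ} (hi : i < μ c) :
    FDE S G c c b i j r = conv (μ c) (G.D c) (G.E c b) i j r := by
  unfold FDE
  rw [conv_congr_left (f' := dd) (fun q _ e => G.F_diag c i q e)]
  exact conv_dd_left hi

lemma FDE_diag_right {c a i j r : ℕ} (hj : j < μ c) :
    FDE S G c a c i j r = conv (μ c) (G.F a c) (G.D c) i j r := by
  unfold FDE
  refine conv_congr_right fun q hq e => ?_
  rw [conv_congr_right (g' := dd) (fun q' _ e' => G.E_diag c q' j e')]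
  exact conv_dd_right hj

lemma solveD {c i i' r : ℕ} (hc : c < n) (hi : i < μ c) (hi' : i' < μ c) :
    G.D c i i' r = Tb S μ c c i i' r - ∑ c'' ∈ Finset.range c, FDE S G c'' c c i i' r := by
  rw [decomp_trunc S G hc hc hi hi' le_rfl, Finset.sum_range_succ]
  rw [FDE_diag_left S G hi,
    conv_congr_right (g' := dd) (fun q _ e => G.E_diag c q i' e), conv_dd_right hi']
  abel

lemma solveE {c b' i j r : ℕ} (hc : c < n) (hb' : b' < n) (hcb' : c ≤ b')
    (hi : i < μ c) (hj : j < μ b') :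
    G.E c b' i j r = conv (μ c) (G.D' c)
      (fun q j' e => Tb S μ c b' q j' e -
        ∑ c'' ∈ Finset.range c, FDE S G c'' c b' q j' e) i j r := by
  rw [conv_sub_right, conv_sum_right]
  rw [conv_congr_right (g' := fun q j' e => ∑ c'' ∈ Finset.range (c+1), FDE S G c'' c b' q j' e)
    (fun q hq e => decomp_trunc S G hc hb' hq hj hcb')]
  rw [conv_sum_right, Finset.sum_range_succ]
  have hmain : conv (μ c) (G.D' c) (FDE S G c c b') i j r = G.E c b' i j r := by
    rw [conv_congr_right (g' := conv (μ c) (G.D c) (G.E c b'))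
      (fun q hq e => FDE_diag_left S G hq)]
    rw [conv_assoc]
    rw [conv_congr_left (f' := dd) (fun q hq e => conv_D'_D S G hc hi hq)]
    exact conv_dd_left hi
  rw [hmain]
  abel

lemma solveF {c b' i j r : ℕ} (hc : c < n) (hb' : b' < n) (hcb' : c ≤ b')
    (hj : j < μ b') (hi : i < μ c) :
    G.F b' c j i r = conv (μ c)
      (fun j' q e => Tb S μ b' c j' q e -
        ∑ c'' ∈ Finset.range c, FDE S G c'' b' c j' q e) (G.D' c) j i r := by
  rw [conv_sub_left, conv_sum_left]
  rw [conv_congr_left (f' := fun j' q e => ∑ c'' ∈ Finset.range (c+1), FDE S G c'' b' c j' q e)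
    (fun q hq e => decomp_trunc' S G hb' hc hj hq hcb')]
  rw [conv_sum_left, Finset.sum_range_succ]
  have hmain : conv (μ c) (FDE S G c b' c) (G.D' c) j i r = G.F b' c j i r := by
    rw [conv_congr_left (f' := conv (μ c) (G.F b' c) (G.D c))
      (fun q hq e => FDE_diag_right S G hq)]
    rw [← conv_assoc]
    rw [conv_congr_right (g' := dd) (fun q hq e => conv_D_D' S G hc hq hi)]
    exact conv_dd_right hi
  rw [hmain]
  abel

end Solve

section Der

open Finset

variable [Ring A] [Algebra ℂ A] {d n : ℕ} {p : ℕ → ZMod 2} {μ : ℕ → ℕ}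

lemma zmod2_split (x y z s : ZMod 2) : (x + z) * s = (x + y) * s + (y + z) * s := by
  rcases zmod2_cases x with rfl | rfl <;> rcases zmod2_cases y with rfl | rfl <;>
    rcases zmod2_cases z with rfl | rfl <;> rcases zmod2_cases s with rfl | rfl <;> decide

lemma sgn_split (x y z s : ZMod 2) :
    sgn ((x + z) * s) = sgn ((x + y) * s) * sgn ((y + z) * s) := by
  rw [← sgn_add, ← zmod2_split]

lemma zmod2_id1 (x y : ZMod 2) : x * y + x * y + y * y = y := by
  rcases zmod2_cases x with rfl | rfl <;> rcases zmod2_cases y with rfl | rfl <;> decide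

lemma zmod2_id2 (h j k : ZMod 2) :
    (h + j) * (h + k) + (h * j + h * k + j * k) = h := by
  rcases zmod2_cases h with rfl | rfl <;> rcases zmod2_cases j with rfl | rfl <;>
    rcases zmod2_cases k with rfl | rfl <;> decide

/-- Right-bracketing derivation data: `[f i j e, t1]` with sign prescribed by the
parities `π i + ρ j` (row/column) equals `f' i j e`, for entries in range. -/
def RDer (t1 : A) (s : ZMod 2) (m1 m2 : ℕ) (π ρ : ℕ → ZMod 2) (f f' : ℕ → ℕ → ℕ → A) : Prop :=
  ∀ i, i < m1 → ∀ j, j < m2 → ∀ e, scomm (sgn ((π i + ρ j) * s)) (f i j e) t1 = f' i j e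

/-- Left-bracketing derivation data: `[t1, f i j e]`. -/
def LDer (t1 : A) (s : ZMod 2) (m1 m2 : ℕ) (π ρ : ℕ → ZMod 2) (f f' : ℕ → ℕ → ℕ → A) : Prop :=
  ∀ i, i < m1 → ∀ j, j < m2 → ∀ e, scomm (sgn ((π i + ρ j) * s)) t1 (f i j e) = f' i j e

lemma RDer.cnv {t1 : A} {s : ZMod 2} {m1 m2 m3 : ℕ} {π ρ τ : ℕ → ZMod 2}
    {f g g' : ℕ → ℕ → ℕ → A}
    (hf : RDer t1 s m1 m2 π ρ f (fun _ _ _ => 0))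
    (hg : RDer t1 s m2 m3 ρ τ g g') :
    RDer t1 s m1 m3 π τ (conv m2 f g) (conv m2 f g') := by
  intro i hi j hj e
  unfold conv
  rw [scomm_sum_left]
  refine Finset.sum_congr rfl fun q hq => ?_
  rw [scomm_sum_left]
  refine Finset.sum_congr rfl fun e' _ => ?_
  have hq' := Finset.mem_range.1 hq
  rw [sgn_split (π i) (ρ q) (τ j) s, scomm_mul_left,
    hg q hq' j hj _, hf i hi q hq' _]
  simp

lemma LDer.cnv {t1 : A} {s : ZMod 2} {m1 m2 m3 : ℕ} {π ρ τ : ℕ → ZMod 2}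
    {f f' g : ℕ → ℕ → ℕ → A}
    (hf : LDer t1 s m1 m2 π ρ f f')
    (hg : LDer t1 s m2 m3 ρ τ g (fun _ _ _ => 0)) :
    LDer t1 s m1 m3 π τ (conv m2 f g) (conv m2 f' g) := by
  intro i hi j hj e
  unfold conv
  rw [scomm_sum_right]
  refine Finset.sum_congr rfl fun q hq => ?_
  rw [scomm_sum_right]
  refine Finset.sum_congr rfl fun e' _ => ?_
  have hq' := Finset.mem_range.1 hq
  rw [sgn_split (π i) (ρ q) (τ j) s, scomm_mul_right,
    hf i hi q hq' _, hg q hq' j hj _]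
  simp

lemma RDer.cnv0 {t1 : A} {s : ZMod 2} {m1 m2 m3 : ℕ} {π ρ τ : ℕ → ZMod 2}
    {f g : ℕ → ℕ → ℕ → A}
    (hf : RDer t1 s m1 m2 π ρ f (fun _ _ _ => 0))
    (hg : RDer t1 s m2 m3 ρ τ g (fun _ _ _ => 0)) :
    RDer t1 s m1 m3 π τ (conv m2 f g) (fun _ _ _ => 0) := by
  intro i hi j hj e
  rw [hf.cnv hg i hi j hj e]
  exact conv_zero_right fun _ _ _ => rfl

lemma LDer.cnv0 {t1 : A} {s : ZMod 2} {m1 m2 m3 : ℕ} {π ρ τ : ℕ → ZMod 2}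
    {f g : ℕ → ℕ → ℕ → A}
    (hf : LDer t1 s m1 m2 π ρ f (fun _ _ _ => 0))
    (hg : LDer t1 s m2 m3 ρ τ g (fun _ _ _ => 0)) :
    LDer t1 s m1 m3 π τ (conv m2 f g) (fun _ _ _ => 0) := by
  intro i hi j hj e
  rw [hf.cnv hg i hi j hj e]
  exact conv_zero_left fun _ _ _ => rfl

lemma RDer.sub {t1 : A} {s : ZMod 2} {m1 m2 : ℕ} {π ρ : ℕ → ZMod 2}
    {f f' g g' : ℕ → ℕ → ℕ → A}
    (hf : RDer t1 s m1 m2 π ρ f f') (hg : RDer t1 s m1 m2 π ρ g g') :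
    RDer t1 s m1 m2 π ρ (fun i j e => f i j e - g i j e)
      (fun i j e => f' i j e - g' i j e) := by
  intro i hi j hj e
  rw [scomm_sub_left, hf i hi j hj e, hg i hi j hj e]

lemma LDer.sub {t1 : A} {s : ZMod 2} {m1 m2 : ℕ} {π ρ : ℕ → ZMod 2}
    {f f' g g' : ℕ → ℕ → ℕ → A}
    (hf : LDer t1 s m1 m2 π ρ f f') (hg : LDer t1 s m1 m2 π ρ g g') :
    LDer t1 s m1 m2 π ρ (fun i j e => f i j e - g i j e)
      (fun i j e => f' i j e - g' i j e) := by
  intro i hi j hj e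
  rw [scomm_sub_right, hf i hi j hj e, hg i hi j hj e]

lemma RDer.sum {ι : Type*} {t1 : A} {s : ZMod 2} {m1 m2 : ℕ} {π ρ : ℕ → ZMod 2}
    (u : Finset ι) {f f' : ι → ℕ → ℕ → ℕ → A}
    (hf : ∀ c ∈ u, RDer t1 s m1 m2 π ρ (f c) (f' c)) :
    RDer t1 s m1 m2 π ρ (fun i j e => ∑ c ∈ u, f c i j e)
      (fun i j e => ∑ c ∈ u, f' c i j e) := by
  intro i hi j hj e
  rw [scomm_sum_left]
  exact Finset.sum_congr rfl fun c hc => hf c hc i hi j hj e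

lemma LDer.sum {ι : Type*} {t1 : A} {s : ZMod 2} {m1 m2 : ℕ} {π ρ : ℕ → ZMod 2}
    (u : Finset ι) {f f' : ι → ℕ → ℕ → ℕ → A}
    (hf : ∀ c ∈ u, LDer t1 s m1 m2 π ρ (f c) (f' c)) :
    LDer t1 s m1 m2 π ρ (fun i j e => ∑ c ∈ u, f c i j e)
      (fun i j e => ∑ c ∈ u, f' c i j e) := by
  intro i hi j hj e
  rw [scomm_sum_right]
  exact Finset.sum_congr rfl fun c hc => hf c hc i hi j hj e

lemma RDer.congr {t1 : A} {s : ZMod 2} {m1 m2 : ℕ} {π ρ : ℕ → ZMod 2}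
    {f g f' g' : ℕ → ℕ → ℕ → A}
    (hf : RDer t1 s m1 m2 π ρ f f')
    (hfg : ∀ i, i < m1 → ∀ j, j < m2 → ∀ e, g i j e = f i j e)
    (hfg' : ∀ i, i < m1 → ∀ j, j < m2 → ∀ e, f' i j e = g' i j e) :
    RDer t1 s m1 m2 π ρ g g' := by
  intro i hi j hj e
  rw [hfg i hi j hj e, hf i hi j hj e, hfg' i hi j hj e]

lemma LDer.congr {t1 : A} {s : ZMod 2} {m1 m2 : ℕ} {π ρ : ℕ → ZMod 2}
    {f g f' g' : ℕ → ℕ → ℕ → A}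
    (hf : LDer t1 s m1 m2 π ρ f f')
    (hfg : ∀ i, i < m1 → ∀ j, j < m2 → ∀ e, g i j e = f i j e)
    (hfg' : ∀ i, i < m1 → ∀ j, j < m2 → ∀ e, f' i j e = g' i j e) :
    LDer t1 s m1 m2 π ρ g g' := by
  intro i hi j hj e
  rw [hfg i hi j hj e, hf i hi j hj e, hfg' i hi j hj e]

/-- RDer for the identity series is zero. -/
lemma RDer_dd (t1 : A) (s : ZMod 2) (m1 : ℕ) (π : ℕ → ZMod 2) :
    RDer t1 s m1 m1 π π dd (fun _ _ _ => 0) := by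
  intro i _ j _ e
  unfold dd
  by_cases h : i = j ∧ e = 0
  · obtain ⟨rfl, rfl⟩ := h
    rw [if_pos ⟨rfl, rfl⟩]
    have : (π i + π i) * s = 0 := by
      rcases zmod2_cases (π i) with h' | h' <;> rw [h'] <;> ring_nf <;>
        rcases zmod2_cases s with h'' | h'' <;> rw [h''] <;> decide
    rw [this, sgn_zero, scomm_one_left]
  · rw [if_neg h, scomm_zero_left]

lemma LDer_dd (t1 : A) (s : ZMod 2) (m1 : ℕ) (π : ℕ → ZMod 2) :
    LDer t1 s m1 m1 π π dd (fun _ _ _ => 0) := by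
  intro i _ j _ e
  unfold dd
  by_cases h : i = j ∧ e = 0
  · obtain ⟨rfl, rfl⟩ := h
    rw [if_pos ⟨rfl, rfl⟩]
    have : (π i + π i) * s = 0 := by
      rcases zmod2_cases (π i) with h' | h' <;> rw [h'] <;> ring_nf <;>
        rcases zmod2_cases s with h'' | h'' <;> rw [h''] <;> decide
    rw [this, sgn_zero]
    simp [scomm]
  · rw [if_neg h, scomm_zero_right]

variable (S : RTT A d p)

/-- Base fact: bracketing `t_{IJ}^{(r)}` with `t_{HK}^{(1)}` vanishes
when `J ≠ H` and `I ≠ K`. -/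
lemma scomm_t_t1_zero {I J H K : ℕ} (hI : I < d) (hJ : J < d) (hH : H < d) (hK : K < d)
    (hJH : J ≠ H) (hIK : I ≠ K) (r : ℕ) :
    scomm (sgn ((p I + p J) * (p H + p K))) (S.t I J r) (S.t H K 1) = 0 := by
  have h := S.rtt I J H K r 1 hI hJ hH hK
  cases r with
  | zero => simpa using h
  | succ r' =>
    rw [h, show min (r' + 1) 1 = 1 from by omega, Finset.sum_range_one,
      S.t_zero, S.t_zero, if_neg (Ne.symm hJH), if_neg hIK]
    simp

/-- Base fact: `[t_{IH}^{(r)}, t_{HK}^{(1)}] = ±t_{IK}^{(r)}`. -/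
lemma scomm_t_t1_H {I H K : ℕ} (hI : I < d) (hH : H < d) (hK : K < d)
    (hIK : I ≠ K) (r : ℕ) :
    scomm (sgn ((p I + p H) * (p H + p K))) (S.t I H r) (S.t H K 1) =
      sgn (p H) • S.t I K r := by
  have h := S.rtt I H H K r 1 hI hH hH hK
  cases r with
  | zero =>
    have h0 : S.t I K 0 = 0 := by rw [S.t_zero, if_neg hIK]
    rw [h0, smul_zero]
    simpa using h
  | succ r' =>
    rw [h, show min (r' + 1) 1 = 1 from by omega, Finset.sum_range_one,
      S.t_zero, S.t_zero, if_pos rfl, if_neg hIK, one_mul, mul_zero, sub_zero]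
    rw [show r' + 1 + 1 - 1 - 0 = r' + 1 from by omega]
    congr 1
    rw [zmod2_id1]

/-- Base fact for the `F`-side: `[t_{KH}^{(1)}, t_{IJ}^{(r)}] = 0` when
`J ≠ K`, `I ≠ H`. -/
lemma scomm_t1'_t_zero {I J H K : ℕ} (hI : I < d) (hJ : J < d) (hH : H < d) (hK : K < d)
    (hJK : J ≠ K) (hIH : I ≠ H) (r : ℕ) :
    scomm (sgn ((p I + p J) * (p H + p K))) (S.t K H 1) (S.t I J r) = 0 := by
  have h := S.rtt I J K H r 1 hI hJ hK hH
  rw [add_comm (p K) (p H)] at h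
  rw [scomm_flip ((p I + p J) * (p H + p K)), h]
  cases r with
  | zero => simp
  | succ r' =>
    rw [show min (r' + 1) 1 = 1 from by omega, Finset.sum_range_one,
      S.t_zero, S.t_zero, if_neg (Ne.symm hJK), if_neg hIH]
    simp

/-- Base fact for the `F`-side: `[t_{KH}^{(1)}, t_{HJ}^{(r)}] = ±t_{KJ}^{(r)}`. -/
lemma scomm_t1'_t_H {J H K : ℕ} (hJ : J < d) (hH : H < d) (hK : K < d)
    (hJK : J ≠ K) (r : ℕ) :
    scomm (sgn ((p H + p J) * (p H + p K))) (S.t K H 1) (S.t H J r) =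
      sgn (p H) • S.t K J r := by
  have h := S.rtt H J K H r 1 hH hJ hK hH
  rw [add_comm (p K) (p H)] at h
  rw [scomm_flip ((p H + p J) * (p H + p K)), h]
  cases r with
  | zero =>
    have h0 : S.t K J 0 = 0 := by rw [S.t_zero, if_neg (Ne.symm hJK)]
    rw [h0, smul_zero]
    simp
  | succ r' =>
    rw [show min (r' + 1) 1 = 1 from by omega, Finset.sum_range_one,
      S.t_zero, S.t_zero, if_neg (Ne.symm hJK), if_pos rfl, zero_mul, mul_one, zero_sub]
    rw [show r' + 1 + 1 - 1 - 0 = r' + 1 from by omega]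
    simp only [smul_neg, neg_neg, smul_smul]
    rw [← sgn_add, zmod2_id2]

end Der

section Base

open Finset

variable [Ring A] [Algebra ℂ A] {d n : ℕ} {p : ℕ → ZMod 2} {μ : ℕ → ℕ}

/-- Block parity function. -/
def πb (p : ℕ → ZMod 2) (μ : ℕ → ℕ) (c : ℕ) : ℕ → ZMod 2 := fun q => p (off μ c + q)

variable (S : RTT A d p) (G : Gauss S.t n μ)

lemma RDer_Tb0 (hd : off μ n = d) {b k j c1 c2 : ℕ} (hbn : b < n) (hk : k < μ (b-1))
    (hj : j < μ b) (hc1 : c1 < b) (hc2 : c2 < b - 1) :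
    RDer (S.t (off μ (b-1) + k) (off μ b + j) 1) (p (off μ (b-1) + k) + p (off μ b + j))
      (μ c1) (μ c2) (πb p μ c1) (πb p μ c2) (Tb S μ c1 c2) (fun _ _ _ => 0) := by
  intro i hi j' hj' e
  exact scomm_t_t1_zero S (off_idx_lt_d hd (by omega) hi) (off_idx_lt_d hd (by omega) hj')
    (off_idx_lt_d hd (by omega) hk) (off_idx_lt_d hd hbn hj)
    (Nat.ne_of_lt (lt_of_lt_of_le (off_idx_lt μ hc2 hj') (Nat.le_add_right _ _)))
    (Nat.ne_of_lt (lt_of_lt_of_le (off_idx_lt μ hc1 hi) (Nat.le_add_right _ _))) e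

lemma RDer_TbH (hd : off μ n = d) {b k j c1 : ℕ} (hbn : b < n) (hk : k < μ (b-1))
    (hj : j < μ b) (hc1 : c1 < b) :
    RDer (S.t (off μ (b-1) + k) (off μ b + j) 1) (p (off μ (b-1) + k) + p (off μ b + j))
      (μ c1) 1 (πb p μ c1) (fun _ => p (off μ (b-1) + k))
      (fun i _ e => S.t (off μ c1 + i) (off μ (b-1) + k) e)
      (fun i _ e => sgn (p (off μ (b-1) + k)) • S.t (off μ c1 + i) (off μ b + j) e) := by
  intro i hi j' _ e
  exact scomm_t_t1_H S (off_idx_lt_d hd (by omega) hi) (off_idx_lt_d hd (by omega) hk)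
    (off_idx_lt_d hd hbn hj)
    (Nat.ne_of_lt (lt_of_lt_of_le (off_idx_lt μ hc1 hi) (Nat.le_add_right _ _))) e

lemma LDer_Tb0 (hd : off μ n = d) {b k j c1 c2 : ℕ} (hbn : b < n) (hk : k < μ (b-1))
    (hj : j < μ b) (hc1 : c1 < b - 1) (hc2 : c2 < b - 1) :
    LDer (S.t (off μ b + j) (off μ (b-1) + k) 1) (p (off μ (b-1) + k) + p (off μ b + j))
      (μ c1) (μ c2) (πb p μ c1) (πb p μ c2) (Tb S μ c1 c2) (fun _ _ _ => 0) := by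
  intro i hi j' hj' e
  exact scomm_t1'_t_zero S (off_idx_lt_d hd (by omega) hi) (off_idx_lt_d hd (by omega) hj')
    (off_idx_lt_d hd (by omega) hk) (off_idx_lt_d hd hbn hj)
    (Nat.ne_of_lt (lt_of_lt_of_le (off_idx_lt μ (by omega : c2 < b) hj') (Nat.le_add_right _ _)))
    (Nat.ne_of_lt (lt_of_lt_of_le (off_idx_lt μ hc1 hi) (Nat.le_add_right _ _))) e

/-- Row-`b` restricted version: bracketing with rows in block `b` vanishes. -/
lemma LDer_TbK (hd : off μ n = d) {b k j c2 : ℕ} (hbn : b < n) (hk : k < μ (b-1))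
    (hj : j < μ b) (hc2 : c2 < b - 1) :
    LDer (S.t (off μ b + j) (off μ (b-1) + k) 1) (p (off μ (b-1) + k) + p (off μ b + j))
      1 (μ c2) (fun _ => p (off μ b + j)) (πb p μ c2)
      (fun _ q e => S.t (off μ b + j) (off μ c2 + q) e) (fun _ _ _ => 0) := by
  intro i _ j' hj' e
  exact scomm_t1'_t_zero S (off_idx_lt_d hd hbn hj) (off_idx_lt_d hd (by omega) hj')
    (off_idx_lt_d hd (by omega) hk) (off_idx_lt_d hd hbn hj)
    (Nat.ne_of_lt (lt_of_lt_of_le (off_idx_lt μ (by omega : c2 < b) hj') (Nat.le_add_right _ _)))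
    (Nat.ne_of_gt (lt_of_lt_of_le (off_idx_lt μ (by omega : b - 1 < b) hk) (Nat.le_add_right _ _))) e

/-- Row-`b-1` restricted version: bracketing moves row `b-1` to row `b`. -/
lemma LDer_TbH (hd : off μ n = d) {b k j c2 : ℕ} (hbn : b < n) (hk : k < μ (b-1))
    (hj : j < μ b) (hc2 : c2 < b - 1) :
    LDer (S.t (off μ b + j) (off μ (b-1) + k) 1) (p (off μ (b-1) + k) + p (off μ b + j))
      1 (μ c2) (fun _ => p (off μ (b-1) + k)) (πb p μ c2)
      (fun _ q e => S.t (off μ (b-1) + k) (off μ c2 + q) e)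
      (fun _ q e => sgn (p (off μ (b-1) + k)) • S.t (off μ b + j) (off μ c2 + q) e) := by
  intro i _ j' hj' e
  exact scomm_t1'_t_H S (off_idx_lt_d hd (by omega) hj')
    (off_idx_lt_d hd (by omega) hk) (off_idx_lt_d hd hbn hj)
    (Nat.ne_of_lt (lt_of_lt_of_le (off_idx_lt μ (by omega : c2 < b) hj') (Nat.le_add_right _ _))) e

/-- If `[·, t1]` kills `D c` (entrywise, with signs), it also kills `D' c`. -/
lemma RDer_D'_aux {t1 : A} {s : ZMod 2} {c : ℕ} (hcn : c < n)
    (hD : RDer t1 s (μ c) (μ c) (πb p μ c) (πb p μ c) (G.D c) (fun _ _ _ => 0)) :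
    RDer t1 s (μ c) (μ c) (πb p μ c) (πb p μ c) (G.D' c) (fun _ _ _ => 0) := by
  have step1 : ∀ i, i < μ c → ∀ j', j' < μ c → ∀ r,
      conv (μ c) (fun i' q e => sgn (πb p μ c q * s) •
        scomm (sgn ((πb p μ c i' + πb p μ c q) * s)) (G.D' c i' q e) t1) (G.D c) i j' r
        = 0 := by
    intro i hi j' hj' r
    have h1 : scomm (sgn ((πb p μ c i + πb p μ c j') * s))
        (conv (μ c) (G.D' c) (G.D c) i j' r) t1 = 0 := by
      rw [conv_D'_D S G hcn hi hj']
      exact RDer_dd t1 s (μ c) (πb p μ c) i hi j' hj' r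
    have h2 : scomm (sgn ((πb p μ c i + πb p μ c j') * s))
        (conv (μ c) (G.D' c) (G.D c) i j' r) t1 =
        sgn (πb p μ c j' * s) • conv (μ c) (fun i' q e => sgn (πb p μ c q * s) •
          scomm (sgn ((πb p μ c i' + πb p μ c q) * s)) (G.D' c i' q e) t1) (G.D c) i j' r := by
      unfold conv
      rw [scomm_sum_left, Finset.smul_sum]
      refine Finset.sum_congr rfl fun q hq => ?_
      rw [scomm_sum_left, Finset.smul_sum]
      refine Finset.sum_congr rfl fun e _ => ?_
      have hq' := Finset.mem_range.1 hq
      rw [sgn_split (πb p μ c i) (πb p μ c q) (πb p μ c j') s, scomm_mul_left,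
        hD q hq' j' hj' _]
      rw [mul_zero, zero_add, add_mul, sgn_add]
      simp only [smul_mul_assoc, smul_smul]
      rw [mul_comm (sgn (πb p μ c q * s)) (sgn (πb p μ c j' * s))]
    rw [h2] at h1
    exact sgn_smul_eq_zero h1
  have step2 : ∀ i, i < μ c → ∀ j', j' < μ c → ∀ r,
      (fun i' q e => sgn (πb p μ c q * s) •
        scomm (sgn ((πb p μ c i' + πb p μ c q) * s)) (G.D' c i' q e) t1) i j' r = 0 := by
    intro i hi j' hj' r
    have e1 : conv (μ c) (conv (μ c) (fun i' q e => sgn (πb p μ c q * s) •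
        scomm (sgn ((πb p μ c i' + πb p μ c q) * s)) (G.D' c i' q e) t1) (G.D c))
        (G.D' c) i j' r = 0 :=
      conv_zero_left fun q hq e => step1 i hi q hq e
    rw [← conv_assoc] at e1
    rw [conv_congr_right (g' := dd) (fun q hq e => conv_D_D' S G hcn hq hj')] at e1
    rw [conv_dd_right hj'] at e1
    exact e1
  intro i hi j' hj' r
  exact sgn_smul_eq_zero (step2 i hi j' hj' r)

/-- If `[t1, ·]` kills `D c`, it also kills `D' c`. -/
lemma LDer_D'_aux {t1 : A} {s : ZMod 2} {c : ℕ} (hcn : c < n)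
    (hD : LDer t1 s (μ c) (μ c) (πb p μ c) (πb p μ c) (G.D c) (fun _ _ _ => 0)) :
    LDer t1 s (μ c) (μ c) (πb p μ c) (πb p μ c) (G.D' c) (fun _ _ _ => 0) := by
  have step1 : ∀ i, i < μ c → ∀ j', j' < μ c → ∀ r,
      conv (μ c) (G.D c) (fun q j'' e => sgn (πb p μ c q * s) •
        scomm (sgn ((πb p μ c q + πb p μ c j'') * s)) t1 (G.D' c q j'' e)) i j' r
        = 0 := by
    intro i hi j' hj' r
    have h1 : scomm (sgn ((πb p μ c i + πb p μ c j') * s))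
        t1 (conv (μ c) (G.D c) (G.D' c) i j' r) = 0 := by
      rw [conv_D_D' S G hcn hi hj']
      exact LDer_dd t1 s (μ c) (πb p μ c) i hi j' hj' r
    have h2 : scomm (sgn ((πb p μ c i + πb p μ c j') * s))
        t1 (conv (μ c) (G.D c) (G.D' c) i j' r) =
        sgn (πb p μ c i * s) • conv (μ c) (G.D c) (fun q j'' e => sgn (πb p μ c q * s) •
          scomm (sgn ((πb p μ c q + πb p μ c j'') * s)) t1 (G.D' c q j'' e)) i j' r := by
      unfold conv
      rw [scomm_sum_right, Finset.smul_sum]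
      refine Finset.sum_congr rfl fun q hq => ?_
      rw [scomm_sum_right, Finset.smul_sum]
      refine Finset.sum_congr rfl fun e _ => ?_
      have hq' := Finset.mem_range.1 hq
      rw [sgn_split (πb p μ c i) (πb p μ c q) (πb p μ c j') s, scomm_mul_right,
        hD i hi q hq' _]
      rw [zero_mul, zero_add, add_mul, sgn_add]
      simp only [mul_smul_comm, smul_smul, smul_mul_assoc]
    rw [h2] at h1
    exact sgn_smul_eq_zero h1
  have step2 : ∀ i, i < μ c → ∀ j', j' < μ c → ∀ r,
      (fun q j'' e => sgn (πb p μ c q * s) •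
        scomm (sgn ((πb p μ c q + πb p μ c j'') * s)) t1 (G.D' c q j'' e)) i j' r = 0 := by
    intro i hi j' hj' r
    have e1 : conv (μ c) (G.D' c) (conv (μ c) (G.D c) (fun q j'' e => sgn (πb p μ c q * s) •
        scomm (sgn ((πb p μ c q + πb p μ c j'') * s)) t1 (G.D' c q j'' e)))
        i j' r = 0 :=
      conv_zero_right fun q hq e => step1 q hq j' hj' e
    rw [conv_assoc] at e1
    rw [conv_congr_left (f' := dd) (fun q hq e => conv_D'_D S G hcn hi hq)] at e1
    rw [conv_dd_left hi] at e1
    exact e1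
  intro i hi j' hj' r
  exact sgn_smul_eq_zero (step2 i hi j' hj' r)

end Base

section Ident

open Finset

variable [Ring A] [Algebra ℂ A] {d n : ℕ} {p : ℕ → ZMod 2} {μ : ℕ → ℕ}
variable (S : RTT A d p) (G : Gauss S.t n μ)

lemma conv_zero_coeff (m : ℕ) (f g : ℕ → ℕ → ℕ → A) (i j : ℕ) :
    conv m f g i j 0 = ∑ q ∈ Finset.range m, f i q 0 * g q j 0 := by
  unfold conv
  exact Finset.sum_congr rfl fun q _ => by rw [Finset.sum_range_one]

lemma conv_one_coeff (m : ℕ) (f g : ℕ → ℕ → ℕ → A) (i j : ℕ) :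
    conv m f g i j 1 = ∑ q ∈ Finset.range m, (f i q 0 * g q j 1 + f i q 1 * g q j 0) := by
  unfold conv
  refine Finset.sum_congr rfl fun q _ => ?_
  rw [show (1:ℕ) + 1 = 2 from rfl, Finset.sum_range_succ, Finset.sum_range_one]

lemma convDE_zero {c' b q1 j : ℕ} (h : c' < b) :
    conv (μ c') (G.D c') (G.E c' b) q1 j 0 = 0 := by
  rw [conv_zero_coeff]
  exact Finset.sum_eq_zero fun q2 _ => by rw [G.E_zero c' b q2 j h, mul_zero]

lemma FDE_one_zero {c' b' b q j : ℕ} (hc'b : c' < b) (hc'b' : c' < b') :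
    FDE S G c' b' b q j 1 = 0 := by
  unfold FDE
  rw [conv_one_coeff]
  refine Finset.sum_eq_zero fun q1 _ => ?_
  rw [G.F_zero b' c' q q1 hc'b', convDE_zero S G hc'b, zero_mul, mul_zero, add_zero]

lemma FDE_coeff_zero {c' b' b q j : ℕ} (hc'b' : c' < b') :
    FDE S G c' b' b q j 0 = 0 := by
  unfold FDE
  rw [conv_zero_coeff]
  refine Finset.sum_eq_zero fun q1 _ => ?_
  rw [G.F_zero b' c' q q1 hc'b', zero_mul]

/-- Identification `E_{b-1,b;k,j}^{(1)} = t_{HK}^{(1)}`. -/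
lemma E_t1 (hd : off μ n = d) {b k j : ℕ} (hb : 2 ≤ b) (hbn : b < n)
    (hk : k < μ (b-1)) (hj : j < μ b) :
    G.E (b-1) b k j 1 = S.t (off μ (b-1) + k) (off μ b + j) 1 := by
  rw [solveE S G (by omega) hbn (by omega) hk hj, conv_one_coeff]
  have key : ∀ q ∈ Finset.range (μ (b-1)),
      (G.D' (b-1) k q 0 *
        (Tb S μ (b-1) b q j 1 - ∑ c'' ∈ Finset.range (b-1), FDE S G c'' (b-1) b q j 1)
       + G.D' (b-1) k q 1 *
        (Tb S μ (b-1) b q j 0 - ∑ c'' ∈ Finset.range (b-1), FDE S G c'' (b-1) b q j 0))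
      = dd k q 0 * Tb S μ (b-1) b q j 1 := by
    intro q hq
    have hq' := Finset.mem_range.1 hq
    have h0 : Tb S μ (b-1) b q j 0 = 0 := by
      show S.t _ _ 0 = 0
      rw [S.t_zero, if_neg]
      exact Nat.ne_of_lt (lt_of_lt_of_le (off_idx_lt μ (by omega) hq') (Nat.le_add_right _ _))
    rw [h0, Finset.sum_eq_zero (fun c'' hc'' =>
        FDE_coeff_zero S G (Finset.mem_range.1 hc'')),
      Finset.sum_eq_zero (fun c'' hc'' =>
        FDE_one_zero S G (by have := Finset.mem_range.1 hc''; omega) (Finset.mem_range.1 hc'')),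
      D'_zero S G (show b - 1 < n by omega) hk hq']
    simp
  rw [Finset.sum_congr rfl key]
  rw [Finset.sum_eq_single k]
  · rw [show (dd k k 0 : A) = 1 from by simp [dd], one_mul]
    rfl
  · intro q _ hq
    rw [show (dd k q 0 : A) = 0 from by simp [dd, Ne.symm hq], zero_mul]
  · intro hmem
    exact absurd (Finset.mem_range.2 hk) hmem

/-- Identification `F_{b,b-1;j,k}^{(1)} = t_{KH}^{(1)}`. -/
lemma F_t1 (hd : off μ n = d) {b k j : ℕ} (hb : 2 ≤ b) (hbn : b < n)
    (hk : k < μ (b-1)) (hj : j < μ b) :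
    G.F b (b-1) j k 1 = S.t (off μ b + j) (off μ (b-1) + k) 1 := by
  rw [solveF S G (by omega) hbn (by omega) hj hk, conv_one_coeff]
  have key : ∀ q ∈ Finset.range (μ (b-1)),
      ((Tb S μ b (b-1) j q 0 - ∑ c'' ∈ Finset.range (b-1), FDE S G c'' b (b-1) j q 0)
          * G.D' (b-1) q k 1
       + (Tb S μ b (b-1) j q 1 - ∑ c'' ∈ Finset.range (b-1), FDE S G c'' b (b-1) j q 1)
          * G.D' (b-1) q k 0)
      = Tb S μ b (b-1) j q 1 * dd q k 0 := by
    intro q hq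
    have hq' := Finset.mem_range.1 hq
    have h0 : Tb S μ b (b-1) j q 0 = 0 := by
      show S.t _ _ 0 = 0
      rw [S.t_zero, if_neg]
      exact ne_of_gt (lt_of_lt_of_le (off_idx_lt μ (by omega) hq') (Nat.le_add_right _ _))
    rw [h0, Finset.sum_eq_zero (fun c'' hc'' =>
        FDE_coeff_zero S G (by have := Finset.mem_range.1 hc''; omega)),
      Finset.sum_eq_zero (fun c'' hc'' =>
        FDE_one_zero S G (Finset.mem_range.1 hc'') (by have := Finset.mem_range.1 hc''; omega)),
      D'_zero S G (show b - 1 < n by omega) hq' hk]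
    simp
  rw [Finset.sum_congr rfl key]
  rw [Finset.sum_eq_single k]
  · rw [show (dd k k 0 : A) = 1 from by simp [dd], mul_one]
    rfl
  · intro q _ hq
    rw [show (dd q k 0 : A) = 0 from by simp [dd, hq], mul_zero]
  · intro hmem
    exact absurd (Finset.mem_range.2 hk) hmem

end Ident

section MainE

open Finset

variable [Ring A] [Algebra ℂ A] {d n : ℕ} {p : ℕ → ZMod 2} {μ : ℕ → ℕ}
variable (S : RTT A d p) (G : Gauss S.t n μ)

lemma mainE (hd : off μ n = d) {a b k j : ℕ} (hab : a + 1 < b) (hbn : b < n)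
    (hk : k < μ (b-1)) (hj : j < μ b) :
    ∀ c, c ≤ a →
      (∀ c', c' < c → RDer (S.t (off μ (b-1) + k) (off μ b + j) 1)
          (p (off μ (b-1) + k) + p (off μ b + j)) (μ c) (μ c') (πb p μ c) (πb p μ c')
          (G.F c c') (fun _ _ _ => 0)) ∧
      RDer (S.t (off μ (b-1) + k) (off μ b + j) 1)
          (p (off μ (b-1) + k) + p (off μ b + j)) (μ c) (μ c) (πb p μ c) (πb p μ c)
          (G.D c) (fun _ _ _ => 0) ∧
      RDer (S.t (off μ (b-1) + k) (off μ b + j) 1)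
          (p (off μ (b-1) + k) + p (off μ b + j)) (μ c) (μ c) (πb p μ c) (πb p μ c)
          (G.D' c) (fun _ _ _ => 0) ∧
      (∀ c', c < c' → c' ≤ a → RDer (S.t (off μ (b-1) + k) (off μ b + j) 1)
          (p (off μ (b-1) + k) + p (off μ b + j)) (μ c) (μ c') (πb p μ c) (πb p μ c')
          (G.E c c') (fun _ _ _ => 0)) ∧
      RDer (S.t (off μ (b-1) + k) (off μ b + j) 1)
          (p (off μ (b-1) + k) + p (off μ b + j)) (μ c) 1 (πb p μ c)
          (fun _ => p (off μ (b-1) + k))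
          (fun i' _ e => G.E c (b-1) i' k e)
          (fun i' _ e => sgn (p (off μ (b-1) + k)) • G.E c b i' j e) := by
  intro c
  induction c using Nat.strong_induction_on with
  | _ c IH =>
  intro hca
  have hcn : c < n := by omega
  have hb1n : b - 1 < n := by omega
  set t1 : A := S.t (off μ (b-1) + k) (off μ b + j) 1 with ht1
  set s : ZMod 2 := p (off μ (b-1) + k) + p (off μ b + j) with hs
  -- F blocks
  have hF : ∀ c', c' < c → RDer t1 s (μ c) (μ c') (πb p μ c) (πb p μ c')
      (G.F c c') (fun _ _ _ => 0) := by
    intro c'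
    induction c' using Nat.strong_induction_on with
    | _ c' IHF =>
    intro hc'c
    have hc'n : c' < n := by omega
    have hFDE : ∀ c'' ∈ Finset.range c', RDer t1 s (μ c) (μ c') (πb p μ c) (πb p μ c')
        (FDE S G c'' c c') (fun _ _ _ => 0) := by
      intro c'' hc''
      have h := Finset.mem_range.1 hc''
      exact (IHF c'' h (by omega)).cnv0
        (((IH c'' (by omega) (by omega)).2.1).cnv0
          ((IH c'' (by omega) (by omega)).2.2.2.1 c' (by omega) (by omega)))
    have hY := (RDer.sub (RDer_Tb0 S hd hbn hk hj (by omega) (by omega))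
        (RDer.sum (Finset.range c') hFDE)).congr
      (g' := fun _ _ _ => (0:A)) (fun _ _ _ _ _ => rfl) (fun i _ q _ e => by simp)
    have hC := hY.cnv0 ((IH c' hc'c (by omega)).2.2.1)
    intro i hi q hq e
    rw [solveF S G hc'n hcn (le_of_lt hc'c) hi hq]
    exact hC i hi q hq e
  -- D block
  have hD : RDer t1 s (μ c) (μ c) (πb p μ c) (πb p μ c) (G.D c) (fun _ _ _ => 0) := by
    have hFDE : ∀ c'' ∈ Finset.range c, RDer t1 s (μ c) (μ c) (πb p μ c) (πb p μ c)
        (FDE S G c'' c c) (fun _ _ _ => 0) := by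
      intro c'' hc''
      have h := Finset.mem_range.1 hc''
      exact (hF c'' h).cnv0
        (((IH c'' h (by omega)).2.1).cnv0
          ((IH c'' h (by omega)).2.2.2.1 c h hca))
    have hY := (RDer.sub (RDer_Tb0 S hd hbn hk hj (by omega) (by omega))
        (RDer.sum (Finset.range c) hFDE)).congr
      (g' := fun _ _ _ => (0:A)) (fun _ _ _ _ _ => rfl) (fun i _ q _ e => by simp)
    intro i hi q hq e
    rw [solveD S G hcn hi hq]
    exact hY i hi q hq e
  -- D' block
  have hD' : RDer t1 s (μ c) (μ c) (πb p μ c) (πb p μ c) (G.D' c) (fun _ _ _ => 0) :=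
    RDer_D'_aux S G hcn hD
  -- E blocks with column ≤ a
  have hE : ∀ c', c < c' → c' ≤ a → RDer t1 s (μ c) (μ c') (πb p μ c) (πb p μ c')
      (G.E c c') (fun _ _ _ => 0) := by
    intro c' hcc' hc'a
    have hc'n : c' < n := by omega
    have hFDE : ∀ c'' ∈ Finset.range c, RDer t1 s (μ c) (μ c') (πb p μ c) (πb p μ c')
        (FDE S G c'' c c') (fun _ _ _ => 0) := by
      intro c'' hc''
      have h := Finset.mem_range.1 hc''
      exact (hF c'' h).cnv0
        (((IH c'' h (by omega)).2.1).cnv0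
          ((IH c'' h (by omega)).2.2.2.1 c' (by omega) hc'a))
    have hX := (RDer.sub (RDer_Tb0 S hd hbn hk hj (by omega) (by omega))
        (RDer.sum (Finset.range c) hFDE)).congr
      (g' := fun _ _ _ => (0:A)) (fun _ _ _ _ _ => rfl) (fun i _ q _ e => by simp)
    have hC := hD'.cnv0 hX
    intro i hi q hq e
    rw [solveE S G hcn hc'n (le_of_lt hcc') hi hq]
    exact hC i hi q hq e
  -- the moving column
  have hM : RDer t1 s (μ c) 1 (πb p μ c) (fun _ => p (off μ (b-1) + k))
      (fun i' _ e => G.E c (b-1) i' k e)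
      (fun i' _ e => sgn (p (off μ (b-1) + k)) • G.E c b i' j e) := by
    have hT : RDer t1 s (μ c) 1 (πb p μ c) (fun _ => p (off μ (b-1) + k))
        (fun i' _ e => Tb S μ c (b-1) i' k e)
        (fun i' _ e => sgn (p (off μ (b-1) + k)) • Tb S μ c b i' j e) :=
      RDer_TbH S hd hbn hk hj (by omega)
    have hFDE : ∀ c'' ∈ Finset.range c, RDer t1 s (μ c) 1 (πb p μ c)
        (fun _ => p (off μ (b-1) + k))
        (fun i' _ e => FDE S G c'' c (b-1) i' k e)
        (fun i' _ e => sgn (p (off μ (b-1) + k)) • FDE S G c'' c b i' j e) := by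
      intro c'' hc''
      have h := Finset.mem_range.1 hc''
      have hMc'' := (IH c'' h (by omega)).2.2.2.2
      have hDc'' := (IH c'' h (by omega)).2.1
      have hinner : RDer t1 s (μ c'') 1 (πb p μ c'') (fun _ => p (off μ (b-1) + k))
          (fun q _ e => conv (μ c'') (G.D c'') (G.E c'' (b-1)) q k e)
          (fun q _ e => sgn (p (off μ (b-1) + k)) •
            conv (μ c'') (G.D c'') (G.E c'' b) q j e) := by
        refine (hDc''.cnv hMc'').congr (fun q _ z _ e => rfl) (fun q _ z _ e => ?_)
        exact conv_smul_right (μ c'') _ (G.D c'') (fun q2 _ e' => G.E c'' b q2 j e') q z e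
      refine ((hF c'' h).cnv hinner).congr (fun i' _ z _ e => rfl) (fun i' _ z _ e => ?_)
      exact conv_smul_right (μ c'') _ (G.F c c'')
        (fun q _ e' => conv (μ c'') (G.D c'') (G.E c'' b) q j e') i' z e
    have hX := RDer.sub hT (RDer.sum (Finset.range c) hFDE)
    have hC := hD'.cnv hX
    intro i' hi' z hz e
    have e1 : G.E c (b-1) i' k e = conv (μ c) (G.D' c)
        (fun q _ e' => Tb S μ c (b-1) q k e' -
          ∑ c'' ∈ Finset.range c, FDE S G c'' c (b-1) q k e') i' z e := by
      rw [solveE S G hcn hb1n (by omega) hi' hk]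
      rfl
    show scomm (sgn ((πb p μ c i' + p (off μ (b-1) + k)) * s)) (G.E c (b-1) i' k e) t1
        = sgn (p (off μ (b-1) + k)) • G.E c b i' j e
    rw [e1, hC i' hi' z hz e]
    rw [conv_congr_right (g' := fun q _ e' => sgn (p (off μ (b-1) + k)) •
          (Tb S μ c b q j e' - ∑ c'' ∈ Finset.range c, FDE S G c'' c b q j e'))
        (fun q hq e' => by simp only [smul_sub, Finset.smul_sum])]
    rw [conv_smul_right (μ c) _ (G.D' c)
        (fun q _ e' => Tb S μ c b q j e' - ∑ c'' ∈ Finset.range c, FDE S G c'' c b q j e')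
        i' z e]
    congr 1
    exact (solveE S G hcn hbn (by omega) hi' hj).symm
  exact ⟨hF, hD, hD', hE, hM⟩

end MainE

section MainF

open Finset

variable [Ring A] [Algebra ℂ A] {d n : ℕ} {p : ℕ → ZMod 2} {μ : ℕ → ℕ}
variable (S : RTT A d p) (G : Gauss S.t n μ)

lemma mainF (hd : off μ n = d) {a b k j : ℕ} (hab : a + 1 < b) (hbn : b < n)
    (hk : k < μ (b-1)) (hj : j < μ b) :
    ∀ c, c ≤ a →
      (∀ c', c' < c → LDer (S.t (off μ b + j) (off μ (b-1) + k) 1)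
          (p (off μ (b-1) + k) + p (off μ b + j)) (μ c) (μ c') (πb p μ c) (πb p μ c')
          (G.F c c') (fun _ _ _ => 0)) ∧
      LDer (S.t (off μ b + j) (off μ (b-1) + k) 1)
          (p (off μ (b-1) + k) + p (off μ b + j)) (μ c) (μ c) (πb p μ c) (πb p μ c)
          (G.D c) (fun _ _ _ => 0) ∧
      LDer (S.t (off μ b + j) (off μ (b-1) + k) 1)
          (p (off μ (b-1) + k) + p (off μ b + j)) (μ c) (μ c) (πb p μ c) (πb p μ c)
          (G.D' c) (fun _ _ _ => 0) ∧
      (∀ c', c < c' → c' ≤ a → LDer (S.t (off μ b + j) (off μ (b-1) + k) 1)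
          (p (off μ (b-1) + k) + p (off μ b + j)) (μ c) (μ c') (πb p μ c) (πb p μ c')
          (G.E c c') (fun _ _ _ => 0)) ∧
      LDer (S.t (off μ b + j) (off μ (b-1) + k) 1)
          (p (off μ (b-1) + k) + p (off μ b + j)) 1 (μ c)
          (fun _ => p (off μ (b-1) + k)) (πb p μ c)
          (fun _ q e => G.F (b-1) c k q e)
          (fun _ q e => sgn (p (off μ (b-1) + k)) • G.F b c j q e) := by
  intro c
  induction c using Nat.strong_induction_on with
  | _ c IH =>
  intro hca
  have hcn : c < n := by omega
  have hb1n : b - 1 < n := by omega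
  set t1 : A := S.t (off μ b + j) (off μ (b-1) + k) 1 with ht1
  set s : ZMod 2 := p (off μ (b-1) + k) + p (off μ b + j) with hs
  -- F blocks
  have hF : ∀ c', c' < c → LDer t1 s (μ c) (μ c') (πb p μ c) (πb p μ c')
      (G.F c c') (fun _ _ _ => 0) := by
    intro c'
    induction c' using Nat.strong_induction_on with
    | _ c' IHF =>
    intro hc'c
    have hc'n : c' < n := by omega
    have hFDE : ∀ c'' ∈ Finset.range c', LDer t1 s (μ c) (μ c') (πb p μ c) (πb p μ c')
        (FDE S G c'' c c') (fun _ _ _ => 0) := by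
      intro c'' hc''
      have h := Finset.mem_range.1 hc''
      exact (IHF c'' h (by omega)).cnv0
        (((IH c'' (by omega) (by omega)).2.1).cnv0
          ((IH c'' (by omega) (by omega)).2.2.2.1 c' (by omega) (by omega)))
    have hY := (LDer.sub (LDer_Tb0 S hd hbn hk hj (by omega) (by omega))
        (LDer.sum (Finset.range c') hFDE)).congr
      (g' := fun _ _ _ => (0:A)) (fun _ _ _ _ _ => rfl) (fun i _ q _ e => by simp)
    have hC := hY.cnv0 ((IH c' hc'c (by omega)).2.2.1)
    intro i hi q hq e
    rw [solveF S G hc'n hcn (le_of_lt hc'c) hi hq]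
    exact hC i hi q hq e
  -- D block
  have hD : LDer t1 s (μ c) (μ c) (πb p μ c) (πb p μ c) (G.D c) (fun _ _ _ => 0) := by
    have hFDE : ∀ c'' ∈ Finset.range c, LDer t1 s (μ c) (μ c) (πb p μ c) (πb p μ c)
        (FDE S G c'' c c) (fun _ _ _ => 0) := by
      intro c'' hc''
      have h := Finset.mem_range.1 hc''
      exact (hF c'' h).cnv0
        (((IH c'' h (by omega)).2.1).cnv0
          ((IH c'' h (by omega)).2.2.2.1 c h hca))
    have hY := (LDer.sub (LDer_Tb0 S hd hbn hk hj (by omega) (by omega))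
        (LDer.sum (Finset.range c) hFDE)).congr
      (g' := fun _ _ _ => (0:A)) (fun _ _ _ _ _ => rfl) (fun i _ q _ e => by simp)
    intro i hi q hq e
    rw [solveD S G hcn hi hq]
    exact hY i hi q hq e
  -- D' block
  have hD' : LDer t1 s (μ c) (μ c) (πb p μ c) (πb p μ c) (G.D' c) (fun _ _ _ => 0) :=
    LDer_D'_aux S G hcn hD
  -- E blocks with column ≤ a
  have hE : ∀ c', c < c' → c' ≤ a → LDer t1 s (μ c) (μ c') (πb p μ c) (πb p μ c')
      (G.E c c') (fun _ _ _ => 0) := by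
    intro c' hcc' hc'a
    have hc'n : c' < n := by omega
    have hFDE : ∀ c'' ∈ Finset.range c, LDer t1 s (μ c) (μ c') (πb p μ c) (πb p μ c')
        (FDE S G c'' c c') (fun _ _ _ => 0) := by
      intro c'' hc''
      have h := Finset.mem_range.1 hc''
      exact (hF c'' h).cnv0
        (((IH c'' h (by omega)).2.1).cnv0
          ((IH c'' h (by omega)).2.2.2.1 c' (by omega) hc'a))
    have hX := (LDer.sub (LDer_Tb0 S hd hbn hk hj (by omega) (by omega))
        (LDer.sum (Finset.range c) hFDE)).congr
      (g' := fun _ _ _ => (0:A)) (fun _ _ _ _ _ => rfl) (fun i _ q _ e => by simp)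
    have hC := hD'.cnv0 hX
    intro i hi q hq e
    rw [solveE S G hcn hc'n (le_of_lt hcc') hi hq]
    exact hC i hi q hq e
  -- the moving row
  have hM : LDer t1 s 1 (μ c) (fun _ => p (off μ (b-1) + k)) (πb p μ c)
      (fun _ q e => G.F (b-1) c k q e)
      (fun _ q e => sgn (p (off μ (b-1) + k)) • G.F b c j q e) := by
    have hT : LDer t1 s 1 (μ c) (fun _ => p (off μ (b-1) + k)) (πb p μ c)
        (fun _ q e => Tb S μ (b-1) c k q e)
        (fun _ q e => sgn (p (off μ (b-1) + k)) • Tb S μ b c j q e) :=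
      LDer_TbH S hd hbn hk hj (by omega)
    have hFDE : ∀ c'' ∈ Finset.range c, LDer t1 s 1 (μ c)
        (fun _ => p (off μ (b-1) + k)) (πb p μ c)
        (fun _ q e => FDE S G c'' (b-1) c k q e)
        (fun _ q e => sgn (p (off μ (b-1) + k)) • FDE S G c'' b c j q e) := by
      intro c'' hc''
      have h := Finset.mem_range.1 hc''
      have hMc'' := (IH c'' h (by omega)).2.2.2.2
      have hinner0 : LDer t1 s (μ c'') (μ c) (πb p μ c'') (πb p μ c)
          (conv (μ c'') (G.D c'') (G.E c'' c)) (fun _ _ _ => 0) :=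
        ((IH c'' h (by omega)).2.1).cnv0 ((IH c'' h (by omega)).2.2.2.1 c h hca)
      refine (hMc''.cnv hinner0).congr (fun z _ q _ e => rfl) (fun z _ q _ e => ?_)
      exact conv_smul_left (μ c'') _ (fun _ q2 e' => G.F b c'' j q2 e')
        (conv (μ c'') (G.D c'') (G.E c'' c)) z q e
    have hX := LDer.sub hT (LDer.sum (Finset.range c) hFDE)
    have hC := hX.cnv hD'
    intro z hz q hq e
    have e1 : G.F (b-1) c k q e = conv (μ c)
        (fun _ q' e' => Tb S μ (b-1) c k q' e' -
          ∑ c'' ∈ Finset.range c, FDE S G c'' (b-1) c k q' e') (G.D' c) z q e := by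
      rw [solveF S G hcn hb1n (by omega) hk hq]
      rfl
    show scomm (sgn ((p (off μ (b-1) + k) + πb p μ c q) * s)) t1 (G.F (b-1) c k q e)
        = sgn (p (off μ (b-1) + k)) • G.F b c j q e
    rw [e1, hC z hz q hq e]
    rw [conv_congr_left (f' := fun _ q' e' => sgn (p (off μ (b-1) + k)) •
          (Tb S μ b c j q' e' - ∑ c'' ∈ Finset.range c, FDE S G c'' b c j q' e'))
        (fun q' hq' e' => by simp only [smul_sub, Finset.smul_sum])]
    rw [conv_smul_left (μ c) _
        (fun _ q' e' => Tb S μ b c j q' e' - ∑ c'' ∈ Finset.range c, FDE S G c'' b c j q' e')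
        (G.D' c) z q e]
    congr 1
    exact (solveF S G hcn hbn (by omega) hj hq).symm
  exact ⟨hF, hD, hD', hE, hM⟩

end MainF

/-- For the Gauss decomposition `T(u) = F(u)D(u)E(u)` with respect to
a composition `μ` of `M + N` with `n` parts (0-based blocks):  for all `a + 1 < b < n`,
any fixed `k < μ (b-1)` and all `r ≥ 1`,
`E_{a,b;i,j}^{(r)} = (-1)^{|k|_{b-1}} [E_{a,b-1;i,k}^{(r)}, E_{b-1;k,j}^{(1)}]` and
`F_{b,a;j,i}^{(r)} = (-1)^{|k|_{b-1}} [F_{b-1;j,k}^{(1)}, F_{b-1,a;k,i}^{(r)}]`,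
where `E_{b-1} := E_{b-1,b}`, `F_{b-1} := F_{b,b-1}` and brackets are supercommutators. -/
theorem statement5 [Ring A] [Algebra ℂ A] {d n : ℕ} {p : ℕ → ZMod 2} {μ : ℕ → ℕ}
    (S : RTT A d p) (G : Gauss S.t n μ) (hd : off μ n = d) :
    ∀ a b i j k r : ℕ, a + 1 < b → b < n → i < μ a → j < μ b → k < μ (b - 1) → 1 ≤ r →
      (G.E a b i j r =
        sgn (p (off μ (b - 1) + k)) •
          scomm (sgn ((p (off μ a + i) + p (off μ (b - 1) + k)) *
              (p (off μ (b - 1) + k) + p (off μ b + j))))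
            (G.E a (b - 1) i k r) (G.E (b - 1) b k j 1)) ∧
      (G.F b a j i r =
        sgn (p (off μ (b - 1) + k)) •
          scomm (sgn ((p (off μ b + j) + p (off μ (b - 1) + k)) *
              (p (off μ (b - 1) + k) + p (off μ a + i))))
            (G.F b (b - 1) j k 1) (G.F (b - 1) a k i r)) := by
  intro a b i j k r hab hbn hi hj hk hr
  constructor
  · -- E part
    have h : scomm (sgn ((p (off μ a + i) + p (off μ (b-1) + k)) *
          (p (off μ (b-1) + k) + p (off μ b + j))))
        (G.E a (b-1) i k r) (S.t (off μ (b-1) + k) (off μ b + j) 1)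
        = sgn (p (off μ (b-1) + k)) • G.E a b i j r :=
      (mainE S G hd hab hbn hk hj a le_rfl).2.2.2.2 i hi 0 (by omega) r
    rw [E_t1 S G hd (by omega) hbn hk hj, h, sgn_smul_sgn_smul]
  · -- F part
    have h : scomm (sgn ((p (off μ (b-1) + k) + p (off μ a + i)) *
          (p (off μ (b-1) + k) + p (off μ b + j))))
        (S.t (off μ b + j) (off μ (b-1) + k) 1) (G.F (b-1) a k i r)
        = sgn (p (off μ (b-1) + k)) • G.F b a j i r :=
      (mainF S G hd hab hbn hk hj a le_rfl).2.2.2.2 0 (by omega) i hi r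
    have hsgn : sgn ((p (off μ b + j) + p (off μ (b-1) + k)) *
          (p (off μ (b-1) + k) + p (off μ a + i)))
        = sgn ((p (off μ (b-1) + k) + p (off μ a + i)) *
          (p (off μ (b-1) + k) + p (off μ b + j))) := by
      rw [mul_comm, add_comm (p (off μ b + j))]
    rw [F_t1 S G hd (by omega) hbn hk hj, hsgn, h, sgn_smul_sgn_smul]

end SuperYangian
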